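/- Let $G$ be a commutative group, $X \subseteq G$, and $S$ the subsemigroup generated by $X$. Define $g \geq h$ iff $g = h$ or $h = gw$ for some $w \in S$. Then for any $x, y$ in the subgroup $\langle X \rangle$ generated by $X$, there exists $z \in \langle X \rangle$ with $x \geq z$ and $y \geq z$. -/
import Mathlib

private lemma mem_one_or_semigroup {G : Type*} [CommGroup G] (X : Set G) {s : G}
    (hs : s ∈ Submonoid.closure X) : s = 1 ∨ s ∈ Subsemigroup.closure X := by
  induction hs using Submonoid.closure_induction with
  | mem x hx => exact Or.inr (Subsemigroup.subset_closure hx)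
  | one => exact Or.inl rfl
  | mul a b _ _ ha hb =>
    rcases ha with ha | ha
    · rcases hb with hb | hb
      · exact Or.inl (by rw [ha, hb, one_mul])
      · exact Or.inr (by rw [ha, one_mul]; exact hb)
    · rcases hb with hb | hb
      · exact Or.inr (by rw [hb, mul_one]; exact ha)
      · exact Or.inr (mul_mem ha hb)

private lemma decomp {G : Type*} [CommGroup G] (X : Set G) {x : G}
    (hx : x ∈ Subgroup.closure X) :
    ∃ s ∈ Submonoid.closure X, ∃ t ∈ Submonoid.closure X, x = s * t⁻¹ := by
  induction hx using Subgroup.closure_induction with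
  | mem g hg => exact ⟨g, Submonoid.subset_closure hg, 1, one_mem _, by simp⟩
  | one => exact ⟨1, one_mem _, 1, one_mem _, by simp⟩
  | mul a b _ _ ha hb =>
    obtain ⟨s, hs, t, ht, rfl⟩ := ha
    obtain ⟨u, hu, v, hv, rfl⟩ := hb
    exact ⟨s * u, mul_mem hs hu, t * v, mul_mem ht hv, by simp [mul_inv, mul_comm, mul_left_comm, mul_assoc]⟩
  | inv a _ ha =>
    obtain ⟨s, hs, t, ht, rfl⟩ := ha
    exact ⟨t, ht, s, hs, by group⟩

theorem downward_directed_of_comm {G : Type*} [CommGroup G] (X : Set G)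
    (S : Subsemigroup G) (hS : S = Subsemigroup.closure X)
    (ge : G → G → Prop)
    (hge : ∀ g h : G, ge g h ↔ (g = h ∨ ∃ w ∈ S, h = g * w)) :
    ∀ x ∈ Subgroup.closure X, ∀ y ∈ Subgroup.closure X,
      ∃ z ∈ Subgroup.closure X, ge x z ∧ ge y z := by
  intro x hx y hy
  have hxy : x⁻¹ * y ∈ Subgroup.closure X := mul_mem (inv_mem hx) hy
  obtain ⟨s, hs, t, ht, hst⟩ := decomp X hxy
  have hsX : s ∈ Subgroup.closure X :=
    Submonoid.closure_le.mpr Subgroup.subset_closure hs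
  refine ⟨x * s, mul_mem hx hsX, ?_, ?_⟩
  · rw [hge]
    rcases mem_one_or_semigroup X hs with h1 | h1
    · exact Or.inl (by rw [h1, mul_one])
    · exact Or.inr ⟨s, hS ▸ h1, rfl⟩
  · rw [hge]
    have hz : x * s = y * t := by
      have : y = x * (s * t⁻¹) := by rw [← hst]; group
      rw [this]; group
    rcases mem_one_or_semigroup X ht with h1 | h1
    · exact Or.inl (by rw [hz, h1, mul_one])
    · exact Or.inr ⟨t, hS ▸ h1, hz⟩
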